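/- Let c : ℝ → ℝ be continuous with c(x) ≥ c₀ for some constant c₀ > 0 and c(x) = 1 for all x ∉ (0,1). Let x₀ < 0 and k > 0. Let u : ℝ → ℂ be a continuous function satisfying the one-dimensional Lippmann–Schwinger equation u(x) = e^{-ik|x−x₀|}/(2ik) + (k/(2i)) ∫₀¹ e^{-ik|x−ξ|} (c(ξ) − 1) u(ξ) dξ for all x ∈ ℝ. Then u(x) ≠ 0 for every x > x₀. (Lemma 2.1.) -/

import Mathlib

/-!
For `x ≥ x₀` the right-hand side of the Lippmann–Schwinger equation is, by variation of
constants, the value of a `C¹` function `v = field k α φ` on all of `ℝ` (with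
`α = e^{ikx₀}/(2ik)` and `φ = (c - 1) u`) satisfying `v'' = -k² c v`. The flux `Im (v̄ v')` of such
a solution is constant, and it vanishes at a zero `x₁ > x₀` of `u`. At `x = 1` only the outgoing
wave is left, `v' = -ik v`, so the flux there is `-k |v 1|²`; hence `v 1 = v' 1 = 0` and
uniqueness for the linear ODE forces `v ≡ 0`. This contradicts `ik v 0 - v' 0 = 2ik α ≠ 0`,
the amplitude of the incident wave.
-/

open MeasureTheory Complex ComplexConjugate Set intervalIntegral

section LinearSecondOrder

variable {v w : ℝ → ℂ}

theorem hasDerivAt_im_conj_mul_zero {r : ℝ → ℝ} {x : ℝ} (hv : HasDerivAt v (w x) x)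
    (hw : HasDerivAt w (r x * v x) x) :
    HasDerivAt (fun t => (conj (v t) * w t).im) 0 x := by
  have h := imCLM.hasFDerivAt.comp_hasDerivAt x (hv.star.mul hw)
  have h0 : imCLM (star (w x) * w x + star (v x) * (r x * v x)) = 0 := by
    rw [imCLM_apply, mul_left_comm, RCLike.star_def, conj_mul', conj_mul']
    norm_cast
  exact h0 ▸ h

theorem im_conj_mul_eq_of_hasDerivAt {r : ℝ → ℝ} (hv : ∀ x, HasDerivAt v (w x) x)
    (hw : ∀ x, HasDerivAt w (r x * v x) x) (a b : ℝ) :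
    (conj (v a) * w a).im = (conj (v b) * w b).im :=
  is_const_of_deriv_eq_zero
    (fun x => (hasDerivAt_im_conj_mul_zero (hv x) (hw x)).differentiableAt)
    (fun x => (hasDerivAt_im_conj_mul_zero (hv x) (hw x)).deriv) a b

theorem eq_zero_of_hasDerivAt_of_eq_zero {r : ℝ → ℝ} {C : ℝ} (hr : ∀ t, |r t| ≤ C)
    (hv : ∀ x, HasDerivAt v (w x) x) (hw : ∀ x, HasDerivAt w (r x * v x) x) {x₀ : ℝ}
    (hv₀ : v x₀ = 0) (hw₀ : w x₀ = 0) : v = 0 ∧ w = 0 := by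
  have hlip (t : ℝ) :
      LipschitzWith (max 1 C.toNNReal) fun p : ℂ × ℂ => (p.2, (r t : ℂ) * p.1) := by
    refine (LipschitzWith.prod_snd.prodMk
      ((lipschitzWith_smul (r t : ℂ)).comp LipschitzWith.prod_fst)).weaken ?_
    refine max_le_max le_rfl ?_
    rw [mul_one, ← NNReal.coe_le_coe, coe_nnnorm, norm_real, Real.norm_eq_abs,
      Real.coe_toNNReal']
    exact (hr t).trans (le_max_left _ _)
  have h := ODE_solution_unique_univ (s := fun _ => univ) (fun t => (hlip t).lipschitzOnWith)
    (f := fun t => (v t, w t)) (g := fun _ => 0)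
    (fun t => ⟨(hv t).prodMk (hw t), trivial⟩)
    (fun t => ⟨(hasDerivAt_const t 0).congr_deriv (by ext <;> simp), trivial⟩) (t₀ := x₀)
    (by simp [hv₀, hw₀])
  exact ⟨funext fun t => congrArg Prod.fst (congrFun h t),
    funext fun t => congrArg Prod.snd (congrFun h t)⟩

end LinearSecondOrder

theorem im_conj_mul_neg_I_mul (k : ℝ) (z : ℂ) : (conj z * (-I * k * z)).im = -(k * ‖z‖ ^ 2) := by
  rw [mul_left_comm, conj_mul', ← ofReal_pow, mul_im, ofReal_re, ofReal_im]
  simp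

theorem Continuous.exists_forall_abs_le_of_eq_off {c : ℝ → ℝ} (hc : Continuous c) {K : Set ℝ}
    (hK : IsCompact K) {a : ℝ} (hca : ∀ x ∉ K, c x = a) : ∃ C, ∀ x, |c x| ≤ C := by
  obtain ⟨C, hC⟩ : ∃ C, ∀ x, ‖c x - a‖ ≤ C :=
    (hc.sub continuous_const).bounded_above_of_compact_support
      (HasCompactSupport.intro hK fun x hx => sub_eq_zero.2 (hca x hx))
  refine ⟨C + |a|, fun x => ?_⟩
  have := abs_sub_abs_le_abs_sub (c x) a
  have := hC x
  rw [Real.norm_eq_abs] at this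
  linarith

theorem hasDerivAt_cexp_mul_ofReal (a : ℂ) (x : ℝ) :
    HasDerivAt (fun t : ℝ => exp (a * t)) (a * exp (a * x)) x := by
  simpa [mul_comm] using ((hasDerivAt_id x).ofReal_comp.const_mul a).cexp

theorem cexp_neg_mul_abs_sub_of_le (k : ℝ) {x ξ : ℝ} (h : ξ ≤ x) :
    exp (-I * k * (|x - ξ| : ℝ)) = exp (-I * k * x) * exp (I * k * ξ) := by
  rw [abs_of_nonneg (sub_nonneg.2 h), ← exp_add]
  push_cast
  ring_nf

theorem cexp_neg_mul_abs_sub_of_ge (k : ℝ) {x ξ : ℝ} (h : x ≤ ξ) :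
    exp (-I * k * (|x - ξ| : ℝ)) = exp (I * k * x) * exp (-I * k * ξ) := by
  rw [abs_sub_comm, cexp_neg_mul_abs_sub_of_le k h, mul_comm]

theorem integral_cexp_abs_sub_mul {k a b : ℝ} {φ : ℝ → ℂ} (hφ : Continuous φ)
    (hφ₀ : ∀ t ∉ Ioo a b, φ t = 0) (x : ℝ) :
    ∫ ξ in a..b, exp (-I * k * (|x - ξ| : ℝ)) * φ ξ =
      exp (-I * k * x) * (∫ ξ in a..x, exp (I * k * ξ) * φ ξ) +
        exp (I * k * x) * ∫ ξ in x..b, exp (-I * k * ξ) * φ ξ := by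
  have hint (s t : ℝ) :
      IntervalIntegrable (fun ξ => exp (-I * k * (|x - ξ| : ℝ)) * φ ξ) volume s t :=
    (by fun_prop : Continuous fun ξ => exp (-I * k * (|x - ξ| : ℝ)) * φ ξ).intervalIntegrable s t
  have hmem {ξ : ℝ} (h : φ ξ ≠ 0) : ξ ∈ Ioo a b := by_contra fun hξ => h (hφ₀ ξ hξ)
  rw [← integral_add_adjacent_intervals (hint a x) (hint x b),
    ← intervalIntegral.integral_const_mul, ← intervalIntegral.integral_const_mul]
  -- `uIcc a x` and `uIcc x b` may be reversed, but `φ` vanishes on the reversed parts.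
  congr 1 <;> refine integral_congr fun ξ hξ => ?_ <;> rcases eq_or_ne (φ ξ) 0 with h | h
  · simp [h]
  · have : ξ ≤ x := by
      rw [mem_uIcc] at hξ
      rcases hξ with hξ | hξ <;> linarith [hξ.1, hξ.2, (hmem h).1]
    rw [cexp_neg_mul_abs_sub_of_le k this]
    ring
  · simp [h]
  · have : x ≤ ξ := by
      rw [mem_uIcc] at hξ
      rcases hξ with hξ | hξ <;> linarith [hξ.1, hξ.2, (hmem h).2]
    rw [cexp_neg_mul_abs_sub_of_ge k this]
    ring

namespace LippmannSchwinger

variable (k : ℝ) (α : ℂ) (φ : ℝ → ℂ)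

noncomputable def leftAmplitude (x : ℝ) : ℂ :=
  α + k / (2 * I) * ∫ t in (0 : ℝ)..x, exp (I * k * t) * φ t

noncomputable def rightAmplitude (x : ℝ) : ℂ :=
  k / (2 * I) * ∫ t in x..(1 : ℝ), exp (-I * k * t) * φ t

noncomputable def field (x : ℝ) : ℂ :=
  exp (-I * k * x) * leftAmplitude k α φ x + exp (I * k * x) * rightAmplitude k φ x

noncomputable def fieldDeriv (x : ℝ) : ℂ :=
  -I * k * (exp (-I * k * x) * leftAmplitude k α φ x) +
    I * k * (exp (I * k * x) * rightAmplitude k φ x)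

variable {k α φ}

theorem field_eq (hφ : Continuous φ) (hφ₀ : ∀ t ∉ Ioo (0 : ℝ) 1, φ t = 0) (x : ℝ) :
    field k α φ x = exp (-I * k * x) * α +
      k / (2 * I) * ∫ ξ in (0 : ℝ)..1, exp (-I * k * (|x - ξ| : ℝ)) * φ ξ := by
  rw [integral_cexp_abs_sub_mul hφ hφ₀, field, leftAmplitude, rightAmplitude]
  ring

theorem eq_field_of_eq (hφ : Continuous φ) (hφ₀ : ∀ t ∉ Ioo (0 : ℝ) 1, φ t = 0) {x₀ x : ℝ}
    (hx : x₀ ≤ x) {z : ℂ}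
    (h : z = exp (-I * k * (|x - x₀| : ℝ)) / (2 * I * k) +
      k / (2 * I) * ∫ ξ in (0 : ℝ)..1, exp (-I * k * (|x - ξ| : ℝ)) * φ ξ) :
    z = field k (exp (I * k * x₀) / (2 * I * k)) φ x := by
  rw [h, field_eq hφ hφ₀, cexp_neg_mul_abs_sub_of_le k hx]
  ring

theorem hasDerivAt_leftAmplitude (hφ : Continuous φ) (x : ℝ) :
    HasDerivAt (leftAmplitude k α φ) (k / (2 * I) * (exp (I * k * x) * φ x)) x := by
  have hf : Continuous fun t : ℝ => exp (I * k * t) * φ t := by fun_prop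
  exact ((integral_hasDerivAt_right (hf.intervalIntegrable _ _)
    (hf.stronglyMeasurableAtFilter _ _) hf.continuousAt).const_mul _).const_add α

theorem hasDerivAt_rightAmplitude (hφ : Continuous φ) (x : ℝ) :
    HasDerivAt (rightAmplitude k φ) (-(k / (2 * I) * (exp (-I * k * x) * φ x))) x := by
  have hf : Continuous fun t : ℝ => exp (-I * k * t) * φ t := by fun_prop
  rw [← mul_neg]
  exact (integral_hasDerivAt_left (hf.intervalIntegrable _ _)
    (hf.stronglyMeasurableAtFilter _ _) hf.continuousAt).const_mul _

theorem hasDerivAt_field (hφ : Continuous φ) (x : ℝ) :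
    HasDerivAt (field k α φ) (fieldDeriv k α φ x) x := by
  refine (((hasDerivAt_cexp_mul_ofReal _ x).mul (hasDerivAt_leftAmplitude hφ x)).add
    ((hasDerivAt_cexp_mul_ofReal _ x).mul (hasDerivAt_rightAmplitude hφ x))).congr_deriv ?_
  rw [fieldDeriv]
  ring

theorem hasDerivAt_fieldDeriv (hφ : Continuous φ) (x : ℝ) :
    HasDerivAt (fieldDeriv k α φ) (-k ^ 2 * (field k α φ x + φ x)) x := by
  refine ((((hasDerivAt_cexp_mul_ofReal _ x).mul (hasDerivAt_leftAmplitude hφ x)).const_mul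
    (-I * k)).add (((hasDerivAt_cexp_mul_ofReal _ x).mul
      (hasDerivAt_rightAmplitude hφ x)).const_mul (I * k))).congr_deriv ?_
  have hexp : exp (-I * k * x) * exp (I * k * x) = 1 := by
    rw [← exp_add]
    simp
  have hβ : 2 * I * (k / (2 * I)) = k := by field_simp
  rw [field]
  linear_combination
    k ^ 2 * (exp (-I * k * x) * leftAmplitude k α φ x + exp (I * k * x) * rightAmplitude k φ x) *
      I_sq - 2 * I * k * (k / (2 * I)) * φ x * hexp - k * φ x * hβ

theorem hasDerivAt_fieldDeriv_of_forall_eq {c : ℝ → ℝ} (hφ : Continuous φ)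
    (hφc : ∀ t, φ t = (c t - 1) * field k α φ t) (x : ℝ) :
    HasDerivAt (fieldDeriv k α φ) ((-(k ^ 2 * c x) : ℝ) * field k α φ x) x :=
  (hasDerivAt_fieldDeriv hφ x).congr_deriv <| by
    rw [hφc]
    push_cast
    ring

theorem fieldDeriv_one : fieldDeriv k α φ 1 = -I * k * field k α φ 1 := by
  simp only [fieldDeriv, field, rightAmplitude, integral_same]
  ring

theorem I_mul_field_zero_sub_fieldDeriv_zero :
    I * k * field k α φ 0 - fieldDeriv k α φ 0 = 2 * I * k * α := by
  simp only [fieldDeriv, field, leftAmplitude, integral_same, ofReal_zero, mul_zero, exp_zero]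
  ring

end LippmannSchwinger

open LippmannSchwinger

theorem lippmann_schwinger_solution_ne_zero
    (c : ℝ → ℝ) (hc : Continuous c)
    (hc1 : ∀ x : ℝ, x ∉ Set.Ioo (0:ℝ) 1 → c x = 1)
    (x₀ : ℝ) (hx₀ : x₀ < 0) (k : ℝ) (hk : 0 < k)
    (u : ℝ → ℂ) (hu : Continuous u)
    (hLS : ∀ x : ℝ, u x =
        Complex.exp (-Complex.I * (k : ℂ) * ((|x - x₀| : ℝ) : ℂ)) / (2 * Complex.I * (k : ℂ))
        + ((k : ℂ) / (2 * Complex.I)) *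
            ∫ ξ in (0:ℝ)..1,
              Complex.exp (-Complex.I * (k : ℂ) * ((|x - ξ| : ℝ) : ℂ)) *
                ((c ξ : ℂ) - 1) * u ξ) :
    ∀ x : ℝ, x₀ < x → u x ≠ 0 := by
  intro x₁ hx₁ hux₁
  set φ : ℝ → ℂ := fun t => ((c t : ℂ) - 1) * u t
  set α : ℂ := exp (I * k * x₀) / (2 * I * k)
  have hφ : Continuous φ := by fun_prop
  have hφ₀ : ∀ t ∉ Ioo (0 : ℝ) 1, φ t = 0 := fun t ht => by simp [φ, hc1 t ht]
  have hu_eq (x : ℝ) (hx : x₀ ≤ x) : u x = field k α φ x :=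
    eq_field_of_eq hφ hφ₀ hx <| (hLS x).trans <| by
      congr 2
      exact integral_congr fun ξ _ => mul_assoc _ _ _
  have hφ_eq (t : ℝ) : φ t = (c t - 1) * field k α φ t := by
    by_cases ht : t ∈ Ioo (0 : ℝ) 1
    · exact congrArg (_ * ·) (hu_eq t (by linarith [ht.1]))
    · simp [hφ₀ t ht, hc1 t ht]
  have hv := hasDerivAt_field (k := k) (α := α) hφ
  have hw := hasDerivAt_fieldDeriv_of_forall_eq hφ hφ_eq
  have hflux := im_conj_mul_eq_of_hasDerivAt hv hw 1 x₁
  rw [fieldDeriv_one, im_conj_mul_neg_I_mul, ← hu_eq x₁ hx₁.le, hux₁] at hflux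
  have hv₁ : field k α φ 1 = 0 := by simpa [hk.ne'] using hflux
  obtain ⟨C, hC⟩ := (hc.const_mul (k ^ 2)).neg.exists_forall_abs_le_of_eq_off
    (isCompact_Icc (a := 0) (b := 1)) (a := -k ^ 2)
    fun t ht => by simp [hc1 t fun h => ht (Ioo_subset_Icc_self h)]
  obtain ⟨hv₀, hw₀⟩ := eq_zero_of_hasDerivAt_of_eq_zero hC hv hw hv₁
    (by rw [fieldDeriv_one, hv₁, mul_zero])
  have hα := I_mul_field_zero_sub_fieldDeriv_zero (k := k) (α := α) (φ := φ)
  rw [hv₀, hw₀] at hα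
  simp [α, hk.ne'] at hα
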